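/- For the residuals in the rational Lanczos setting, the Petrov–Galerkin conditions hold: W_m^T * R_B(s) = 0 and V_m^T * R_C(s) = 0, where R_B(s) = B − (sI − A) * V_m * (sI_m − A_m)^{-1} * B_m and R_C(s) = C^T − (sI − A)^T * W_m * (sI_m − A_m)^{-T} * C_m^T. -/
import Mathlib


open Matrix

/-- Multi-index type: an `N`-tuple of indices with mode sizes `d i`. -/
abbrev Idx {N : ℕ} (d : Fin N → ℕ) : Type := ∀ i, Fin (d i)

/-- The Einstein product, contracting over the middle multi-index `K`:
`(A *_M B)_{j,i} = ∑_k A_{j,k} B_{k,i}`. -/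
def eprod {J K I : Type*} [Fintype K] (A : Matrix J K ℝ) (B : Matrix K I ℝ) :
    Matrix J I ℝ :=
  Matrix.of fun j i => ∑ k, A j k * B k i

/-- The identity (diagonal) tensor. -/
def idT (J : Type*) [DecidableEq J] : Matrix J J ℝ :=
  Matrix.of fun j i => if j = i then 1 else 0

lemma eprod_eq {J K I : Type*} [Fintype K] (A : Matrix J K ℝ) (B : Matrix K I ℝ) :
    eprod A B = A * B := by
  ext j i; simp [eprod, Matrix.mul_apply]

lemma idT_eq (J : Type*) [DecidableEq J] : idT J = (1 : Matrix J J ℝ) := by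
  ext j i; simp [idT, Matrix.one_apply]

/-- Petrov–Galerkin conditions for the residuals in the rational
Lanczos setting: Wᵀ * R_B(s) = 0 and Vᵀ * R_C(s) = 0. -/
theorem petrov_galerkin_residuals {J1 J2 K1 K2 I1 I2 m : ℕ}
    (A : Matrix (Fin J1 × Fin J2) (Fin J1 × Fin J2) ℝ)
    (B : Matrix (Fin J1 × Fin J2) (Fin K1 × Fin K2) ℝ)
    (C : Matrix (Fin I1 × Fin I2) (Fin J1 × Fin J2) ℝ)
    (V W : Matrix (Fin J1 × Fin J2) (Fin K1 × Fin (m * K2)) ℝ)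
    (s : ℝ)
    -- reduced tensors A_m = Wᵀ A V, B_m = Wᵀ B, C_m = C V :
    (Am : Matrix (Fin K1 × Fin (m * K2)) (Fin K1 × Fin (m * K2)) ℝ)
    (Bm : Matrix (Fin K1 × Fin (m * K2)) (Fin K1 × Fin K2) ℝ)
    (Cm : Matrix (Fin I1 × Fin I2) (Fin K1 × Fin (m * K2)) ℝ)
    (hAm : Am = eprod Wᵀ (eprod A V)) (hBm : Bm = eprod Wᵀ B) (hCm : Cm = eprod C V)
    -- bi-orthonormality Wᵀ V = I_m :
    (hbi : eprod Wᵀ V = idT (Fin K1 × Fin (m * K2)))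
    -- Rm = (sI_m − A_m)⁻¹ (two-sided inverse) :
    (Rm : Matrix (Fin K1 × Fin (m * K2)) (Fin K1 × Fin (m * K2)) ℝ)
    (hRm : eprod (s • idT (Fin K1 × Fin (m * K2)) - Am) Rm = idT (Fin K1 × Fin (m * K2)) ∧
           eprod Rm (s • idT (Fin K1 × Fin (m * K2)) - Am) = idT (Fin K1 × Fin (m * K2)))
    -- residuals R_B(s) = B − (sI−A) V (sI_m−A_m)⁻¹ B_m and
    -- R_C(s) = Cᵀ − (sI−A)ᵀ W (sI_m−A_m)⁻ᵀ C_mᵀ :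
    (RB : Matrix (Fin J1 × Fin J2) (Fin K1 × Fin K2) ℝ)
    (RC : Matrix (Fin J1 × Fin J2) (Fin I1 × Fin I2) ℝ)
    (hRB : RB = B - eprod (eprod (s • idT (Fin J1 × Fin J2) - A) V) (eprod Rm Bm))
    (hRC : RC = Cᵀ - eprod (eprod (s • idT (Fin J1 × Fin J2) - A)ᵀ W) (eprod Rmᵀ Cmᵀ)) :
    eprod Wᵀ RB = 0 ∧ eprod Vᵀ RC = 0 := by
  simp only [eprod_eq, idT_eq] at *
  obtain ⟨hR1, hR2⟩ := hRm
  simp only [← Matrix.mul_assoc] at hRB hRC ⊢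
  have hWAV : Wᵀ * (s • (1 : Matrix (Fin J1 × Fin J2) (Fin J1 × Fin J2) ℝ) - A) * V
      = s • (1 : Matrix (Fin K1 × Fin (m * K2)) (Fin K1 × Fin (m * K2)) ℝ) - Am := by
    rw [Matrix.mul_sub, Matrix.sub_mul, hAm, Matrix.mul_assoc Wᵀ A V,
      Matrix.mul_smul, Matrix.mul_one, Matrix.smul_mul, hbi]
  have hVAW : Vᵀ * (s • (1 : Matrix (Fin J1 × Fin J2) (Fin J1 × Fin J2) ℝ) - A)ᵀ * W
      = (s • (1 : Matrix (Fin K1 × Fin (m * K2)) (Fin K1 × Fin (m * K2)) ℝ) - Am)ᵀ := by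
    rw [← hWAV, Matrix.transpose_mul, Matrix.transpose_mul, Matrix.transpose_transpose,
      Matrix.mul_assoc]
  constructor
  · rw [hRB, Matrix.mul_sub]
    simp only [← Matrix.mul_assoc]
    rw [hWAV, Matrix.mul_assoc _ Rm, ← Matrix.mul_assoc, hR1, Matrix.one_mul, ← hBm,
      sub_self]
  · rw [hRC, Matrix.mul_sub]
    simp only [← Matrix.mul_assoc]
    have h1 : (s • (1 : Matrix (Fin K1 × Fin (m * K2)) (Fin K1 × Fin (m * K2)) ℝ) - Am)ᵀ
        * Rmᵀ = 1 := by
      rw [← Matrix.transpose_mul, hR2, Matrix.transpose_one]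
    rw [hVAW, h1, Matrix.one_mul, hCm, Matrix.transpose_mul, sub_self]
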